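/- Let ν ∈ int(T), ν_c ∈ C(ν), and r ∈ [R_ν]. If both the r'th row of W^(ν) is zero (W^(ν)_{r,:} = 0) and the r'th column of W^(ν_c) is zero (W^(ν_c)_{:,r} = 0), then the partial derivative of the objective φ_H with respect to W^(ν)_{r,:} is zero and the partial derivative of φ_H with respect to W^(ν_c)_{:,r} is zero at these weights. -/

import Mathlib

namespace HTF

/-- Rooted tree whose leaves are labeled by elements of `Fin N`. -/
inductive MTree (N : ℕ) : Type
  | leaf : Fin N → MTree N
  | node : List (MTree N) → MTree N

noncomputable instance {N : ℕ} : DecidableEq (MTree N) := fun _ _ => Classical.dec _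

namespace MTree

variable {N : ℕ}

/-- The list of leaf labels of the tree. -/
def leafList : MTree N → List (Fin N)
  | .leaf i => [i]
  | .node ts => ts.attach.flatMap fun t => t.1.leafList
decreasing_by simp only [MTree.node.sizeOf_spec]; have := List.sizeOf_lt_of_mem t.2; omega

/-- The label of a node: set of leaf indices appearing in its subtree. -/
def label (t : MTree N) : Finset (Fin N) := t.leafList.toFinset

/-- All nodes (subtrees) of the tree. -/
def nodes : MTree N → List (MTree N)
  | .leaf i => [.leaf i]
  | .node ts => .node ts :: ts.attach.flatMap fun t => t.1.nodes
decreasing_by simp only [MTree.node.sizeOf_spec]; have := List.sizeOf_lt_of_mem t.2; omega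

/-- The children of a node. -/
def children : MTree N → List (MTree N)
  | .leaf _ => []
  | .node ts => ts

/-- Interior (non-leaf) node. -/
def IsInterior : MTree N → Prop
  | .leaf _ => False
  | .node _ => True

/-- Every non-leaf node has at least one child. -/
def Branching : MTree N → Prop
  | .leaf _ => True
  | .node ts => ts ≠ [] ∧ ∀ t ∈ ts.attach, Branching t.1
decreasing_by simp only [MTree.node.sizeOf_spec]; have := List.sizeOf_lt_of_mem t.2; omega

/-- A valid mode tree over `[N]`: it has exactly `N` leaves, labeled `{1},...,{N}`
(each index appearing exactly once), and interior nodes have children. -/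
def Valid (t : MTree N) : Prop :=
  t.leafList.Nodup ∧ (∀ i : Fin N, i ∈ t.leafList) ∧ t.Branching

/-- The parent of node `ν` in the tree (first argument), if it exists. -/
noncomputable def parentIn : MTree N → MTree N → Option (MTree N)
  | .leaf _, _ => none
  | .node ts, ν =>
      if ν ∈ ts then some (.node ts)
      else ts.attach.findSome? fun t => parentIn t.1 ν
termination_by T _ => sizeOf T
decreasing_by simp only [MTree.node.sizeOf_spec]; have := List.sizeOf_lt_of_mem t.2; omega

end MTree

open MTree

variable {N : ℕ} (D : Fin N → ℕ)

/-- Full index set of an order-`N` tensor with mode dimensions `D`. -/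
abbrev Idx : Type := ∀ n, Fin (D n)

/-- The intermediate tensors `W^(ν,r)` of a hierarchical tensor factorization with
local-component numbers `R` and weight matrices `W` (columns indexed by `ℕ`).
An order-`|label ν|` tensor is represented as a function of a full index tuple that
only depends on the coordinates in `label ν`; with this representation, the tensor
product of tensors over disjoint mode sets is pointwise multiplication and the mode
permutation `π_ν` is the identity. -/
noncomputable def interm (R : MTree N → ℕ) (W : ∀ ν : MTree N, Fin (R ν) → ℕ → ℝ) :
    MTree N → ℕ → Idx D → ℝ
  | .leaf i, r => fun x =>
      if h : R (.leaf i) = D i then W (.leaf i) (Fin.cast h.symm (x i)) r else 0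
  | .node ts, r => fun x =>
      ∑ r' : Fin (R (.node ts)),
        W (.node ts) r' r * (ts.attach.map fun t => interm R W t.1 (r' : ℕ) x).prod
decreasing_by simp only [MTree.node.sizeOf_spec]; have := List.sizeOf_lt_of_mem t.2; omega

/-- The end tensor `W_H` of the hierarchical tensor factorization with mode tree `T`. -/
noncomputable def endT (R : MTree N → ℕ) (W : ∀ ν : MTree N, Fin (R ν) → ℕ → ℝ)
    (T : MTree N) : Idx D → ℝ :=
  interm D R W T 0

/-- Entry `(i, j)` of the weight matrix at node `ν` (zero outside the row range). -/
noncomputable def went (R : MTree N → ℕ) (W : ∀ ν : MTree N, Fin (R ν) → ℕ → ℝ)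
    (ν : MTree N) (i j : ℕ) : ℝ :=
  if h : i < R ν then W ν ⟨i, h⟩ j else 0

/-- `R_{Pa(ν)}` : the number of local components at the parent of `ν` in `T`
(`1` if `ν` is the root). -/
noncomputable def Rpar (R : MTree N → ℕ) (T ν : MTree N) : ℕ :=
  if ν = T then 1 else ((parentIn T ν).map R).getD 0

/-- Replace the weight matrix at node `μ` by `A`, keeping all other weight matrices. -/
noncomputable def replace (R : MTree N → ℕ) (W : ∀ ν : MTree N, Fin (R ν) → ℕ → ℝ)
    (μ : MTree N) (A : Fin (R μ) → ℕ → ℝ) : ∀ ν : MTree N, Fin (R ν) → ℕ → ℝ :=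
  fun ν => if h : ν = μ then fun i j => A (Fin.cast (congrArg R h) i) j else W ν

/-- Frobenius (Euclidean) inner product of order-`N` tensors. -/
noncomputable def tinner (A B : Idx D → ℝ) : ℝ := ∑ x, A x * B x

/-- Frobenius norm of an order-`N` tensor. -/
noncomputable def tnorm (A : Idx D → ℝ) : ℝ := Real.sqrt (∑ x, (A x) ^ 2)

/-- Frobenius norm of an order-`|s|` tensor represented as a function of a full index
tuple depending only on the coordinates in `s` (so that the sum over the full index
set over-counts each entry `∏_{n ∉ s} D n` times). -/
noncomputable def rnorm (s : Finset (Fin N)) (A : Idx D → ℝ) : ℝ :=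
  Real.sqrt ((∑ x, (A x) ^ 2) / ∏ n ∈ sᶜ, (D n : ℝ))

/-- Squared norm of the `r`'th column of the weight matrix at node `c`. -/
noncomputable def colSq (R : MTree N → ℕ) (W : ∀ ν : MTree N, Fin (R ν) → ℕ → ℝ)
    (c : MTree N) (r : ℕ) : ℝ :=
  ∑ i : Fin (R c), (W c i r) ^ 2

/-- Squared norm of the `r`'th row of the weight matrix at node `ν` of `T`. -/
noncomputable def rowSq (R : MTree N → ℕ) (W : ∀ ν : MTree N, Fin (R ν) → ℕ → ℝ)
    (T ν : MTree N) (r : ℕ) : ℝ :=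
  ∑ j : Fin (Rpar R T ν), (went R W ν r (j : ℕ)) ^ 2

/-- `σ^(ν,r)` : the norm of the `(ν,r)`'th local component, i.e. the product of the
norms of the vectors in `LC(ν,r)` (the `r`'th row of `W^(ν)` together with the `r`'th
columns of the weight matrices of the children of `ν`). -/
noncomputable def sigmaLoc (R : MTree N → ℕ) (W : ∀ ν : MTree N, Fin (R ν) → ℕ → ℝ)
    (T ν : MTree N) (r : ℕ) : ℝ :=
  Real.sqrt (rowSq R W T ν r) * (ν.children.map fun c => Real.sqrt (colSq R W c r)).prod

/-- `PadR_r(W^(ν)_{r,:})` : the matrix whose `r`'th row is the `r`'th row of `W^(ν)`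
and whose other rows are zero. -/
noncomputable def padRow (R : MTree N → ℕ) (W : ∀ ν : MTree N, Fin (R ν) → ℕ → ℝ)
    (ν : MTree N) (r : ℕ) : Fin (R ν) → ℕ → ℝ :=
  fun i j => if (i : ℕ) = r then W ν i j else 0

/-- `PadC_r(W^(c)_{:,r})` : the matrix whose `r`'th column is the `r`'th column of
`W^(c)` and whose other columns are zero. -/
noncomputable def padCol (R : MTree N → ℕ) (W : ∀ ν : MTree N, Fin (R ν) → ℕ → ℝ)
    (c : MTree N) (r : ℕ) : Fin (R c) → ℕ → ℝ :=
  fun i j => if j = r then W c i r else 0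

/-- `Ĉ^(ν,r)` : the end tensor obtained by normalizing the `r`'th local component at
`ν` and setting all other local components at `ν` to zero, i.e. the end tensor computed
with `W^(ν)` replaced by `σ^{-1} · PadR_r(W^(ν)_{r,:})` (and `0` if `σ^(ν,r) = 0`). -/
noncomputable def hatC (R : MTree N → ℕ) (W : ∀ ν : MTree N, Fin (R ν) → ℕ → ℝ)
    (T ν : MTree N) (r : ℕ) : Idx D → ℝ :=
  if sigmaLoc R W T ν r = 0 then 0
  else endT D R (replace R W ν fun i j =>
    if (i : ℕ) = r then (sigmaLoc R W T ν r)⁻¹ * W ν i j else 0) T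

/-- The objective `φ_H = L_H ∘ (end tensor)`. -/
noncomputable def obj (L : (Idx D → ℝ) → ℝ) (R : MTree N → ℕ) (T : MTree N)
    (W : ∀ ν : MTree N, Fin (R ν) → ℕ → ℝ) : ℝ :=
  L (endT D R W T)

/-- Update the single entry `(i, j)` of the weight matrix at node `μ` to the value `s`. -/
noncomputable def upd (R : MTree N → ℕ) (W : ∀ ν : MTree N, Fin (R ν) → ℕ → ℝ)
    (μ : MTree N) (i j : ℕ) (s : ℝ) : ∀ ν : MTree N, Fin (R ν) → ℕ → ℝ :=
  fun ν i' j' => if ν = μ ∧ (i' : ℕ) = i ∧ j' = j then s else W ν i' j'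

/-- `∂φ_H/∂W^(μ)_{i,j}` : the partial derivative of the objective with respect to the
`(i,j)` entry of the weight matrix at node `μ`, at the point `W`. -/
noncomputable def dObj (L : (Idx D → ℝ) → ℝ) (R : MTree N → ℕ) (T : MTree N)
    (W : ∀ ν : MTree N, Fin (R ν) → ℕ → ℝ) (μ : MTree N) (i j : ℕ) : ℝ :=
  deriv (fun s : ℝ => obj D L R T (upd R W μ i j s)) (went R W μ i j)

/-- `∇L(A)` : the gradient of a loss over tensors, entrywise. -/
noncomputable def tgrad (L : (Idx D → ℝ) → ℝ) (A : Idx D → ℝ) : Idx D → ℝ :=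
  fun x => deriv (fun s : ℝ => L (Function.update A x s)) (A x)

/-- Local smoothness of the loss: its gradient is Lipschitz on compact sets. -/
def LocSmooth (L : (Idx D → ℝ) → ℝ) : Prop :=
  ∀ K : Set (Idx D → ℝ), IsCompact K → ∃ β : NNReal, LipschitzOnWith β (tgrad D L) K

/-- Gradient flow over the objective: each entry of each weight matrix moves against
its partial derivative. -/
def GradFlow (L : (Idx D → ℝ) → ℝ) (R : MTree N → ℕ) (T : MTree N)
    (Wt : ℝ → ∀ ν : MTree N, Fin (R ν) → ℕ → ℝ) : Prop :=
  ∀ (ν : MTree N) (i : Fin (R ν)) (j : ℕ) (t : ℝ), 0 ≤ t →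
    HasDerivAt (fun s : ℝ => Wt s ν i j) (- dObj D L R T (Wt t) ν (i : ℕ) j) t

/-- The matricization of an order-`N` tensor according to the index set `I` : the
matrix whose rows are indexed by the modes in `I` and whose columns are indexed by the
remaining modes. -/
noncomputable def matricize (I : Finset (Fin N)) (A : Idx D → ℝ) :
    Matrix (∀ i : {n // n ∈ I}, Fin (D i)) (∀ j : {n // n ∉ I}, Fin (D j)) ℝ :=
  fun ρ κ => A fun n => if h : n ∈ I then ρ ⟨n, h⟩ else κ ⟨n, h⟩

/-- Frobenius norm of the weight matrix `W^(ν) ∈ ℝ^{R_ν × R_{Pa(ν)}}` at node `ν` of `T`. -/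
noncomputable def wFro (R : MTree N → ℕ) (W : ∀ ν : MTree N, Fin (R ν) → ℕ → ℝ)
    (T ν : MTree N) : ℝ :=
  Real.sqrt (∑ i : Fin (R ν), ∑ j : Fin (Rpar R T ν), (W ν i (j : ℕ)) ^ 2)

/-- The weights obtained by pruning the `(ν,r)`'th local component: the `r`'th row of
`W^(ν)` and the `r`'th column of `W^(c)` for every child `c` of `ν` are set to zero. -/
noncomputable def pruneLC (R : MTree N → ℕ) (W : ∀ ν : MTree N, Fin (R ν) → ℕ → ℝ)
    (ν : MTree N) (r : ℕ) : ∀ μ : MTree N, Fin (R μ) → ℕ → ℝ :=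
  fun μ i j =>
    if μ = ν ∧ (i : ℕ) = r then 0
    else if μ ∈ ν.children ∧ j = r then 0
    else W μ i j

end HTF

/-! The objective is constant along each of the coordinates in question. An entry
`W^(ν)_{r,j}` enters the end tensor only through the summand `W^(ν)_{r,j} · ⊗_{c'} W^(c',r)` of
`W^(ν,j)`, which contains the zero factor `W^(c,r)`. An entry `W^(c)_{i,r}` enters only through
`W^(c,r)`, which feeds into `W^(ν,k)` solely with the coefficient `W^(ν)_{r,k}`; this vanishes
for all `k < R_{Pa(ν)}`, the only columns the rest of the tree reads. -/

namespace HTF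

variable {N : ℕ}

namespace MTree

@[induction_eliminator]
theorem induction {P : MTree N → Prop} (leaf : ∀ i, P (.leaf i))
    (node : ∀ ts, (∀ t ∈ ts, P t) → P (.node ts)) : ∀ t, P t
  | .leaf i => leaf i
  | .node ts => node ts fun t _ => induction leaf node t

theorem mem_leafList_node {ts : List (MTree N)} {ℓ : Fin N} :
    ℓ ∈ (node ts).leafList ↔ ∃ t ∈ ts, ℓ ∈ t.leafList := by
  simp [leafList]

theorem mem_nodes_node {ts : List (MTree N)} {x : MTree N} :
    x ∈ (node ts).nodes ↔ x = node ts ∨ ∃ t ∈ ts, x ∈ t.nodes := by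
  simp [nodes]

@[simp] theorem mem_children_node {ts : List (MTree N)} {x : MTree N} :
    x ∈ (node ts).children ↔ x ∈ ts := Iff.rfl

theorem sizeOf_lt_of_mem_children {t x : MTree N} (h : x ∈ t.children) :
    sizeOf x < sizeOf t := by
  cases t with
  | leaf i => simp [children] at h
  | node ts =>
    have := List.sizeOf_lt_of_mem (mem_children_node.1 h)
    simp only [node.sizeOf_spec]; omega

theorem mem_nodes_self (t : MTree N) : t ∈ t.nodes := by
  cases t <;> simp [nodes]

theorem sizeOf_le_of_mem_nodes {T x : MTree N} (h : x ∈ T.nodes) : sizeOf x ≤ sizeOf T := by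
  induction T with
  | leaf i => simp [nodes] at h; simp [h]
  | node ts ih =>
    obtain rfl | ⟨t, ht, hx⟩ := mem_nodes_node.1 h
    · rfl
    · exact (ih t ht hx).trans (sizeOf_lt_of_mem_children (t := node ts) ht).le

theorem mem_nodes_trans {T μ x : MTree N} (hμ : μ ∈ T.nodes) (hx : x ∈ μ.nodes) :
    x ∈ T.nodes := by
  induction T with
  | leaf i => simp [nodes] at hμ; rwa [hμ] at hx
  | node ts ih =>
    obtain rfl | ⟨t, ht, hμt⟩ := mem_nodes_node.1 hμ
    · exact hx
    · exact mem_nodes_node.2 (.inr ⟨t, ht, ih t ht hμt⟩)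

theorem mem_nodes_of_mem_children {T μ x : MTree N} (hμ : μ ∈ T.nodes)
    (hx : x ∈ μ.children) : x ∈ T.nodes := by
  cases μ with
  | leaf i => simp [children] at hx
  | node ts => exact mem_nodes_trans hμ (mem_nodes_node.2 (.inr ⟨x, hx, mem_nodes_self x⟩))

theorem leafList_subset_of_mem_nodes {T x : MTree N} (h : x ∈ T.nodes) :
    x.leafList ⊆ T.leafList := by
  induction T with
  | leaf i => simp [nodes] at h; simp [h]
  | node ts ih =>
    obtain rfl | ⟨t, ht, hx⟩ := mem_nodes_node.1 h
    · exact List.Subset.refl _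
    · exact fun ℓ hℓ => mem_leafList_node.2 ⟨t, ht, ih t ht hx hℓ⟩

theorem Branching.of_mem_nodes {T x : MTree N} (hT : T.Branching) (h : x ∈ T.nodes) :
    x.Branching := by
  induction T with
  | leaf i => simp [nodes] at h; rwa [h]
  | node ts ih =>
    rw [Branching] at hT
    obtain rfl | ⟨t, ht, hx⟩ := mem_nodes_node.1 h
    · rwa [Branching]
    · exact ih t ht (hT.2 ⟨t, ht⟩ (List.mem_attach _ _)) hx

theorem Branching.leafList_ne_nil {t : MTree N} (ht : t.Branching) : t.leafList ≠ [] := by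
  induction t with
  | leaf i => simp [leafList]
  | node ts ih =>
    rw [Branching] at ht
    obtain ⟨t, hts⟩ := List.exists_mem_of_ne_nil ts ht.1
    obtain ⟨ℓ, hℓ⟩ :=
      List.exists_mem_of_ne_nil _ (ih t hts (ht.2 ⟨t, hts⟩ (List.mem_attach _ _)))
    exact List.ne_nil_of_mem (mem_leafList_node.2 ⟨t, hts, hℓ⟩)

theorem leafList_node (ts : List (MTree N)) : (node ts).leafList = ts.flatMap leafList := by
  rw [leafList]; simp

theorem nodup_leafList_of_mem {ts : List (MTree N)} (h : (node ts).leafList.Nodup)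
    {t : MTree N} (ht : t ∈ ts) : t.leafList.Nodup := by
  rw [leafList_node, List.nodup_flatMap] at h
  exact h.1 t ht

theorem disjoint_leafList_of_mem {ts : List (MTree N)} (h : (node ts).leafList.Nodup)
    {a b : MTree N} (ha : a ∈ ts) (hb : b ∈ ts) (hab : a ≠ b) :
    a.leafList.Disjoint b.leafList := by
  rw [leafList_node, List.nodup_flatMap] at h
  have : Std.Symm (Function.onFun List.Disjoint (leafList (N := N))) := ⟨fun _ _ h => h.symm⟩
  exact h.2.forall ha hb hab

theorem mem_nodes_of_parentIn_eq_some {T x p : MTree N} (h : parentIn T x = some p) :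
    x ∈ T.nodes := by
  induction T with
  | leaf i => simp [parentIn] at h
  | node ts ih =>
    rw [parentIn] at h
    split_ifs at h with hx
    · exact mem_nodes_node.2 (.inr ⟨x, hx, mem_nodes_self x⟩)
    · obtain ⟨⟨a, ha⟩, -, hxa⟩ := List.exists_of_findSome?_eq_some h
      exact mem_nodes_node.2 (.inr ⟨a, ha, ih a ha hxa⟩)

theorem parentIn_eq_some {T μ x : MTree N} (hT : T.leafList.Nodup) (hx : x.leafList ≠ [])
    (hμ : μ ∈ T.nodes) (hxμ : x ∈ μ.children) : parentIn T x = some μ := by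
  induction T with
  | leaf i => simp [nodes] at hμ; simp [hμ, children] at hxμ
  | node ts ih =>
    obtain rfl | ⟨a, ha, hμa⟩ := mem_nodes_node.1 hμ
    · rw [parentIn, if_pos (mem_children_node.1 hxμ)]
    obtain ⟨ℓ, hℓ⟩ := List.exists_mem_of_ne_nil _ hx
    have hxa : x.leafList ⊆ a.leafList :=
      leafList_subset_of_mem_nodes (mem_nodes_of_mem_children hμa hxμ)
    -- siblings have disjoint leaves, so `a` is the only child of the root that can contain `x`
    have hunique : ∀ b ∈ ts, ℓ ∈ b.leafList → b = a := fun b hb hℓb =>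
      by_contra fun hba => disjoint_leafList_of_mem hT hb ha hba hℓb (hxa hℓ)
    have hxts : x ∉ ts := by
      intro hxts
      have hsize := (sizeOf_lt_of_mem_children hxμ).trans_le (sizeOf_le_of_mem_nodes hμa)
      rw [hunique x hxts hℓ] at hsize
      exact lt_irrefl _ hsize
    have hsome : parentIn a x = some μ := ih a ha (nodup_leafList_of_mem hT ha) hμa
    rw [parentIn, if_neg hxts]
    cases hp : ts.attach.findSome? fun t => parentIn t.1 x with
    | none =>
      rw [List.findSome?_eq_none_iff] at hp
      simpa [hsome] using hp ⟨a, ha⟩ (List.mem_attach _ _)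
    | some p =>
      obtain ⟨⟨b, hb⟩, -, hbp⟩ := List.exists_of_findSome?_eq_some hp
      have hba : b = a :=
        hunique b hb (leafList_subset_of_mem_nodes (mem_nodes_of_parentIn_eq_some hbp) hℓ)
      subst hba
      exact hbp.symm.trans hsome

theorem eq_of_mem_children {T μ μ' x : MTree N} (hT : T.leafList.Nodup) (hb : T.Branching)
    (hμ : μ ∈ T.nodes) (hμ' : μ' ∈ T.nodes) (hx : x ∈ μ.children) (hx' : x ∈ μ'.children) :
    μ = μ' := by
  have hne := (hb.of_mem_nodes (mem_nodes_of_mem_children hμ hx)).leafList_ne_nil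
  exact Option.some.inj
    ((parentIn_eq_some hT hne hμ hx).symm.trans (parentIn_eq_some hT hne hμ' hx'))

end MTree

open MTree

theorem Rpar_eq_of_mem_children (R : MTree N → ℕ) {T μ x : MTree N} (hT : T.leafList.Nodup)
    (hb : T.Branching) (hμ : μ ∈ T.nodes) (hx : x ∈ μ.children) : Rpar R T x = R μ := by
  have hxT : x ≠ T := by
    rintro rfl
    exact (sizeOf_lt_of_mem_children hx).not_ge (sizeOf_le_of_mem_nodes hμ)
  have hne := (hb.of_mem_nodes (mem_nodes_of_mem_children hμ hx)).leafList_ne_nil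
  rw [Rpar, if_neg hxT, parentIn_eq_some hT hne hμ hx]
  rfl

section Interm

variable {D : Fin N → ℕ} {R : MTree N → ℕ} {W : ∀ ν : MTree N, Fin (R ν) → ℕ → ℝ}

theorem upd_of_ne {μ₀ μ : MTree N} (h : μ ≠ μ₀) (i j : ℕ) (s : ℝ) :
    upd R W μ₀ i j s μ = W μ := by
  funext i' k
  simp [upd, h]

theorem upd_apply_of_not {μ₀ μ : MTree N} {i j k : ℕ} {i' : Fin (R μ)} {s : ℝ}
    (h : ¬(μ = μ₀ ∧ (i' : ℕ) = i ∧ k = j)) : upd R W μ₀ i j s μ i' k = W μ i' k :=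
  if_neg h

theorem interm_leaf (i : Fin N) (k : ℕ) (x : Idx D) :
    interm D R W (.leaf i) k x =
      if h : R (.leaf i) = D i then W (.leaf i) (Fin.cast h.symm (x i)) k else 0 := by
  rw [interm]

theorem interm_node (ts : List (MTree N)) (k : ℕ) (x : Idx D) :
    interm D R W (.node ts) k x =
      ∑ r : Fin (R (.node ts)),
        W (.node ts) r k * (ts.attach.map fun t => interm D R W t.1 r x).prod := by
  rw [interm]

theorem interm_eq_zero_of_col_eq_zero {c : MTree N} {r : ℕ} (h : ∀ i, W c i r = 0) :
    interm D R W c r = 0 := by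
  funext x
  cases c with
  | leaf i => rw [interm_leaf]; split <;> simp [h]
  | node ts => simp [interm_node, h]

theorem prod_interm_eq_zero_of_col_eq_zero {ts : List (MTree N)} {c : MTree N} (hc : c ∈ ts)
    {r : ℕ} (h : ∀ i, W c i r = 0) (x : Idx D) :
    (ts.attach.map fun t => interm D R W t.1 r x).prod = 0 :=
  List.prod_eq_zero (List.mem_map.2 ⟨⟨c, hc⟩, List.mem_attach _ _,
    congrFun (interm_eq_zero_of_col_eq_zero h) x⟩)

theorem interm_upd_row_eq {ν c : MTree N} (hc : c ∈ ν.children) {r : ℕ}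
    (hcol : ∀ i, W c i r = 0) (j : ℕ) (s : ℝ) (μ : MTree N) (k : ℕ) :
    interm D R (upd R W ν r j s) μ k = interm D R W μ k := by
  induction μ generalizing k with
  | leaf i =>
    have hiν : MTree.leaf i ≠ ν := by rintro rfl; simp [children] at hc
    funext x
    rw [interm_leaf, interm_leaf, upd_of_ne hiν]
  | node ts ih =>
    funext x
    rw [interm_node, interm_node]
    refine Finset.sum_congr rfl fun r' _ => ?_
    by_cases hr : MTree.node ts = ν ∧ (r' : ℕ) = r
    · obtain ⟨rfl, hr⟩ := hr
      have hcν : c ≠ .node ts := fun h => (sizeOf_lt_of_mem_children hc).ne (congrArg sizeOf h)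
      have hcol' : ∀ i, upd R W (.node ts) r j s c i r = 0 := by
        simpa [upd_of_ne hcν] using hcol
      rw [mem_children_node] at hc
      rw [hr, prod_interm_eq_zero_of_col_eq_zero hc hcol,
        prod_interm_eq_zero_of_col_eq_zero hc hcol', mul_zero, mul_zero]
    · rw [upd_apply_of_not fun h => hr ⟨h.1, h.2.1⟩]
      congr 2
      exact List.map_congr_left fun t _ => congrFun (ih t.1 t.2 r') x

theorem interm_upd_col_eq {T ν c : MTree N} (hT : T.leafList.Nodup) (hb : T.Branching)
    (hν : ν ∈ T.nodes) (hc : c ∈ ν.children) {r : Fin (R ν)}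
    (hrow : ∀ j < Rpar R T ν, W ν r j = 0) (i : ℕ) (s : ℝ) {μ : MTree N} (hμ : μ ∈ T.nodes)
    {k : ℕ} (hμc : μ = c → k ≠ r) (hμν : μ = ν → k < Rpar R T ν) :
    interm D R (upd R W c i r s) μ k = interm D R W μ k := by
  induction μ generalizing k with
  | leaf i₀ =>
    funext x
    rw [interm_leaf, interm_leaf]
    split
    · exact upd_apply_of_not fun h => hμc h.1 h.2.2
    · rfl
  | node ts ih =>
    funext x
    rw [interm_node, interm_node]
    refine Finset.sum_congr rfl fun r' _ => ?_
    rw [upd_apply_of_not fun h => hμc h.1 h.2.2]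
    by_cases hr : MTree.node ts = ν ∧ (r' : ℕ) = r
    · obtain ⟨rfl, hr⟩ := hr
      rw [Fin.ext hr, hrow k (hμν rfl), zero_mul, zero_mul]
    · congr 2
      refine List.map_congr_left fun ⟨t, ht⟩ _ => congrFun (ih t ht ?_ ?_ ?_) x
      · exact mem_nodes_of_mem_children hμ ht
      · rintro rfl hr'
        exact hr ⟨eq_of_mem_children hT hb hμ hν ht hc, hr'⟩
      · rintro rfl
        rw [Rpar_eq_of_mem_children R hT hb hμ ht]
        exact r'.isLt

theorem dObj_eq_zero_of_endT_upd_eq {L : (Idx D → ℝ) → ℝ} {T μ : MTree N} {i j : ℕ}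
    (h : ∀ s, endT D R (upd R W μ i j s) T = endT D R W T) : dObj D L R T W μ i j = 0 := by
  simp only [dObj, obj, h, deriv_const]

end Interm

end HTF

open HTF HTF.MTree in
theorem statement6_general {N : ℕ} (D : Fin N → ℕ) (L : (Idx D → ℝ) → ℝ)
    (T : MTree N) (hT : T.Valid)
    (R : MTree N → ℕ)
    (W : ∀ ν : MTree N, Fin (R ν) → ℕ → ℝ)
    (ν : MTree N) (hν : ν ∈ T.nodes)
    (c : MTree N) (hc : c ∈ ν.children) (r : Fin (R ν))
    (hrow : ∀ j : ℕ, j < Rpar R T ν → W ν r j = 0)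
    (hcol : ∀ i : Fin (R c), W c i (r : ℕ) = 0) :
    (∀ j : ℕ, j < Rpar R T ν → dObj D L R T W ν (r : ℕ) j = 0) ∧
    (∀ i : Fin (R c), dObj D L R T W c (i : ℕ) (r : ℕ) = 0) := by
  obtain ⟨hnd, -, hb⟩ := hT
  refine ⟨fun j _ => dObj_eq_zero_of_endT_upd_eq fun s => interm_upd_row_eq hc hcol j s T 0,
    fun i => dObj_eq_zero_of_endT_upd_eq fun s =>
      interm_upd_col_eq hnd hb hν hc hrow i s (mem_nodes_self T) ?_ ?_⟩
  · rintro rfl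
    exact absurd (sizeOf_le_of_mem_nodes hν) (sizeOf_lt_of_mem_children hc).not_ge
  · rintro rfl
    simp [Rpar]

open HTF HTF.MTree in
/-- let `ν` be an interior node, `c` a child of `ν`, and `r ∈ [R_ν]`.
If both the `r`'th row of `W^(ν)` and the `r`'th column of `W^(c)` are zero, then the
partial derivatives of the objective `φ_H` with respect to the entries of the `r`'th
row of `W^(ν)` and with respect to the entries of the `r`'th column of `W^(c)` all
vanish. -/
theorem statement6 {N : ℕ} (D : Fin N → ℕ) (L : (Idx D → ℝ) → ℝ)
    (hL : Differentiable ℝ L) (hLs : LocSmooth D L) (hL0 : ∀ A, 0 ≤ L A)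
    (T : MTree N) (hT : T.Valid)
    (R : MTree N → ℕ) (hR : ∀ i : Fin N, R (MTree.leaf i) = D i)
    (W : ∀ ν : MTree N, Fin (R ν) → ℕ → ℝ)
    (ν : MTree N) (hν : ν ∈ T.nodes) (hint : ν.IsInterior)
    (c : MTree N) (hc : c ∈ ν.children) (r : Fin (R ν))
    (hrow : ∀ j : ℕ, j < Rpar R T ν → W ν r j = 0)
    (hcol : ∀ i : Fin (R c), W c i (r : ℕ) = 0) :
    (∀ j : ℕ, j < Rpar R T ν → dObj D L R T W ν (r : ℕ) j = 0) ∧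
    (∀ i : Fin (R c), dObj D L R T W c (i : ℕ) (r : ℕ) = 0) :=
  statement6_general D L T hT R W ν hν c hc r hrow hcol
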